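/- arXiv:2002.09001 — 3 statements merged into one kernel-verified Lean document; each statement's English description precedes it below -/
import Mathlib

section
/- (Dichotomy for collections of caps.) For every A > 0 there exist α > 0 (depending only on d), a constant C₀ > 0, and K₀ ≥ 1 (both depending on d, m, A) such that for all K ≥ K₀ the following holds: for any finite collection 𝒯 of balls of radius K^{−1} in ℝ^{d−1} with centers in B^{d−1}(0,2), at least one of the following occurs. (i) There exists an affine subspace V of ℝ^{d−1} of dimension m such that every τ ∈ 𝒯 is contained in the C₀ K^{−α}-neighborhood of V. (ii) There exist τ, τ′ ∈ 𝒯 such that |M(ξ − ω)·(ξ̄ − ω̄)| ≥ A K^{−1} for all ξ, ξ̄ ∈ τ and all ω, ω̄ ∈ τ′. -/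
open MeasureTheory Metric

/-- The quadratic form `Mξ·η` associated to the hyperbolic paraboloid: the diagonal
matrix `M` has `+1` in the first `d-1-m` entries and `-1` in the last `m` entries. -/
noncomputable def Mform (d m : ℕ) (ξ η : EuclideanSpace ℝ (Fin (d - 1))) : ℝ :=
  ∑ i : Fin (d - 1), (if (i : ℕ) < d - 1 - m then (1 : ℝ) else -1) * ξ i * η i

/-!
If alternative (ii) fails, every pair of caps contains points at which the form is below
`A K⁻¹`, so every difference `u` of centres has `|Mu·u| ≤ δ = (A + 20) K⁻¹`, and by
polarisation the centres `vᵢ`, taken relative to one of them, satisfy `|Mvᵢ·vⱼ| ≤ 2δ`.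
Among the projections of the `vᵢ` to the `m` negative coordinates choose at most `m` whose
determinant is maximal: by Cramer's rule every projection is a combination of these with
coefficients in `[-1, 1]`. Subtracting the same combination of the `vᵢ` leaves a vector `q`
with no negative part, so `‖q‖² = Mq·q ≤ (m + 1)² · 2δ`. Hence all centres lie within
`O(K^{-1/2})` of an affine subspace of dimension `m`, which is (i) with `α = 1/2`.
-/

open Module

theorem Submodule.exists_le_finrank_eq {K V : Type*} [DivisionRing K] [AddCommGroup V] [Module K V]
    [Module.Finite K V] (W : Submodule K V) {n : ℕ} (hWn : finrank K W ≤ n)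
    (hn : n ≤ finrank K V) : ∃ W' : Submodule K V, W ≤ W' ∧ finrank K W' = n := by
  induction n, hWn using Nat.le_induction with
  | base => exact ⟨W, le_rfl, rfl⟩
  | succ n _ ih =>
    obtain ⟨W', hWW', hW'⟩ := ih (by omega)
    have hW'top : W' ≠ ⊤ := fun h => by rw [h, finrank_top] at hW'; omega
    obtain ⟨v, -, hv⟩ := SetLike.exists_of_lt hW'top.lt_top
    exact ⟨W' ⊔ K ∙ v, hWW'.trans le_sup_left, by rw [finrank_sup_span_singleton hv, hW']⟩

theorem exists_barycentric_spanner {𝕜 F ι : Type*} [Field 𝕜] [LinearOrder 𝕜]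
    [IsStrictOrderedRing 𝕜] [AddCommGroup F] [Module 𝕜 F] [FiniteDimensional 𝕜 F] [Finite ι]
    (y : ι → F) :
    ∃ (k : ℕ) (s : Fin k → ι), k ≤ finrank 𝕜 F ∧
      ∀ i, ∃ c : Fin k → 𝕜, (∀ j, |c j| ≤ 1) ∧ y i = ∑ j, c j • y (s j) := by
  classical
  set W := Submodule.span 𝕜 (Set.range y)
  let b := Module.finBasis 𝕜 W
  let y' : ι → W := fun i => ⟨y i, Submodule.subset_span ⟨i, rfl⟩⟩
  have hy' : Submodule.span 𝕜 (Set.range y') = ⊤ := by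
    convert Submodule.span_span_coe_preimage (R := 𝕜) (s := Set.range y)
    ext ⟨x, hx⟩
    simp [y', Subtype.ext_iff]
  obtain ⟨κ, a, -, hspan, hli⟩ := exists_linearIndependent' 𝕜 y'
  let e₀ := Basis.mk hli (hspan.trans hy').ge
  let s₀ := a ∘ (e₀.indexEquiv b).symm
  have hs₀ : b.det (y' ∘ s₀) ≠ 0 := by
    have : y' ∘ s₀ = e₀.reindex (e₀.indexEquiv b) := by
      ext j; simp [s₀, e₀]
    rw [this]
    exact (b.isUnit_det _).ne_zero
  have : Nonempty (Fin (finrank 𝕜 W) → ι) := ⟨s₀⟩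
  obtain ⟨s, hs⟩ := Finite.exists_max fun s : Fin (finrank 𝕜 W) → ι => |b.det (y' ∘ s)|
  have hdet : b.det (y' ∘ s) ≠ 0 := fun h => hs₀ (abs_nonpos_iff.1 (by simpa [h] using hs s₀))
  obtain ⟨hli, hsp⟩ := b.is_basis_iff_det.2 (isUnit_iff_ne_zero.2 hdet)
  let e := Basis.mk hli hsp.ge
  refine ⟨_, s, Submodule.finrank_le W, fun i => ⟨fun j => e.repr (y' i) j, fun j => ?_, ?_⟩⟩
  · -- Cramer's rule, with the denominator maximal among all choices of `s`.
    have hcramer : b.det (y' ∘ s) * e.repr (y' i) j = b.det (y' ∘ Function.update s j i) := by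
      rw [Function.comp_update]
      exact congr($(b.det_smul_mk_coord_eq_det_update hli hsp.ge j) (y' i))
    have := hs (Function.update s j i)
    rw [← hcramer, abs_mul] at this
    exact le_of_mul_le_mul_left (by simpa using this) (abs_pos.2 hdet)
  · simpa [e, y'] using congr(Subtype.val $((e.sum_repr (y' i)).symm))

section AlmostIsotropic

variable {E F : Type*} [NormedAddCommGroup E] [NormedSpace ℝ E]

theorem abs_map_sum_smul_le {κ : Type*} [Fintype κ] (f : E →ₗ[ℝ] ℝ) {c : κ → ℝ}
    (hc : ∀ j, |c j| ≤ 1) {y : κ → E} {ε : ℝ} (hy : ∀ j, |f (y j)| ≤ ε) :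
    |f (∑ j, c j • y j)| ≤ Fintype.card κ * ε := by
  calc |f (∑ j, c j • y j)| ≤ ∑ j, |c j| * |f (y j)| := by
        simpa [abs_mul] using Finset.abs_sum_le_sum_abs (fun j => c j * f (y j)) Finset.univ
    _ ≤ ∑ _j : κ, ε := Finset.sum_le_sum fun j _ =>
        (mul_le_mul (hc j) (hy j) (abs_nonneg _) zero_le_one).trans_eq (one_mul ε)
    _ = Fintype.card κ * ε := by simp

variable [AddCommGroup F] [Module ℝ F] [FiniteDimensional ℝ F]

theorem exists_submodule_near_of_abs_bilin_le {ι : Type*} [Finite ι]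
    (B : LinearMap.BilinForm ℝ E) (P : E →ₗ[ℝ] F) (hB : ∀ q, P q = 0 → ‖q‖ ^ 2 ≤ B q q)
    (v : ι → E) {ε : ℝ} (hv : ∀ a b, |B (v a) (v b)| ≤ ε) :
    ∃ W : Submodule ℝ E, finrank ℝ W ≤ finrank ℝ F ∧
      ∀ a, ∃ w ∈ W, ‖v a - w‖ ≤ (finrank ℝ F + 1) * √ε := by
  obtain ⟨k, s, hk, hs⟩ := exists_barycentric_spanner (𝕜 := ℝ) (P ∘ v)
  refine ⟨Submodule.span ℝ (Set.range (v ∘ s)), ?_, fun a => ?_⟩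
  · exact (finrank_range_le_card (v ∘ s)).trans (by simpa using hk)
  obtain ⟨c, hc, hPv⟩ := hs a
  set S := ∑ j, c j • v (s j)
  have hleft : ∀ x, |B (v x) S| ≤ k * ε := fun x => by
    have := abs_map_sum_smul_le (B (v x)) hc fun j => hv x (s j)
    rwa [Fintype.card_fin] at this
  have hright : ∀ x, |B S (v x)| ≤ k * ε := fun x => by
    have := abs_map_sum_smul_le (B.flip (v x)) hc fun j => hv (s j) x
    rwa [Fintype.card_fin] at this
  have hSS : |B S S| ≤ k * (k * ε) := by
    have := abs_map_sum_smul_le (B S) hc fun j => hright (s j)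
    rwa [Fintype.card_fin] at this
  have hq : ‖v a - S‖ ^ 2 ≤ ((k + 1) * √ε) ^ 2 := by
    have hε : 0 ≤ ε := (abs_nonneg _).trans (hv a a)
    have hexp : B (v a - S) (v a - S) = B (v a) (v a) - B (v a) S - B S (v a) + B S S := by
      simp only [map_sub, LinearMap.sub_apply]; ring
    calc ‖v a - S‖ ^ 2 ≤ B (v a - S) (v a - S) := hB _ (by simpa [S] using sub_eq_zero.2 hPv)
      _ ≤ (k + 1) ^ 2 * ε := by
        rw [hexp]
        have := hv a a; have := hleft a; have := hright a
        rw [abs_le] at *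
        nlinarith
      _ = ((k + 1) * √ε) ^ 2 := by rw [mul_pow, Real.sq_sqrt hε]
  refine ⟨S, Submodule.sum_mem _ fun j _ =>
    Submodule.smul_mem _ _ (Submodule.subset_span ⟨j, rfl⟩), ?_⟩
  calc ‖v a - S‖ ≤ (k + 1) * √ε := abs_le_of_sq_le_sq' hq (by positivity) |>.2
    _ ≤ (finrank ℝ F + 1) * √ε := by gcongr

end AlmostIsotropic

section Mform

variable {d m : ℕ}

local notation "E" => EuclideanSpace ℝ (Fin (d - 1))

variable (d m) in
noncomputable def mDiag : E →ₗ[ℝ] E where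
  toFun ξ := WithLp.toLp 2 fun i => (if (i : ℕ) < d - 1 - m then (1 : ℝ) else -1) * ξ i
  map_add' ξ η := by ext i; simp [mul_add]
  map_smul' c ξ := by ext i; simp [mul_left_comm]

theorem mform_eq_inner_mDiag (ξ η : E) : Mform d m ξ η = inner ℝ (mDiag d m ξ) η := by
  simp [Mform, mDiag, PiLp.inner_apply, mul_comm]

theorem norm_mDiag (ξ : E) : ‖mDiag d m ξ‖ = ‖ξ‖ := by
  simp only [EuclideanSpace.norm_eq, mDiag, LinearMap.coe_mk, AddHom.coe_mk, norm_mul]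
  congr 2 with i
  split_ifs <;> simp

theorem abs_mform_le (ξ η : E) : |Mform d m ξ η| ≤ ‖ξ‖ * ‖η‖ := by
  simpa [mform_eq_inner_mDiag, norm_mDiag] using abs_real_inner_le_norm (mDiag d m ξ) η

variable (d m) in
noncomputable def mBilin : LinearMap.BilinForm ℝ E := innerₗ E ∘ₗ mDiag d m

@[simp]
theorem mBilin_apply (ξ η : E) : mBilin d m ξ η = Mform d m ξ η := by
  simp [mBilin, mform_eq_inner_mDiag]

variable (d m) in
def negCoords : E →ₗ[ℝ] ({i : Fin (d - 1) // d - 1 - m ≤ (i : ℕ)} → ℝ) where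
  toFun q i := q i
  map_add' _ _ := rfl
  map_smul' _ _ := rfl

theorem finrank_negCoords_le :
    finrank ℝ ({i : Fin (d - 1) // d - 1 - m ≤ (i : ℕ)} → ℝ) ≤ m := by
  rw [Module.finrank_fintype_fun_eq_card, Fintype.card_subtype]
  have := Finset.card_filter_add_card_filter_not (s := Finset.univ)
    (p := fun i : Fin (d - 1) => (i : ℕ) < d - 1 - m)
  simp only [not_lt, Finset.card_univ, Fintype.card_fin, Fin.card_filter_val_lt] at this
  omega

theorem norm_sq_le_mform_self {q : E} (hq : negCoords d m q = 0) : ‖q‖ ^ 2 ≤ Mform d m q q := by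
  rw [EuclideanSpace.norm_sq_eq, Mform]
  refine (Finset.sum_congr rfl fun i _ => ?_).le
  split_ifs with hi
  · simp [sq]
  · simp [show q i = 0 from congr_fun hq ⟨i, by omega⟩]

theorem mform_comm (ξ η : E) : Mform d m ξ η = Mform d m η ξ :=
  Finset.sum_congr rfl fun _ _ => by ring

theorem abs_mform_le_two_mul_of_abs_mform_self_le {u w : E} {δ : ℝ}
    (hu : |Mform d m u u| ≤ δ) (hw : |Mform d m w w| ≤ δ)
    (huw : |Mform d m (u - w) (u - w)| ≤ δ) : |Mform d m u w| ≤ 2 * δ := by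
  have hpolar :
      Mform d m (u - w) (u - w) = Mform d m u u - 2 * Mform d m u w + Mform d m w w := by
    simp only [← mBilin_apply, map_sub, LinearMap.sub_apply]
    simp only [mBilin_apply, mform_comm w u]
    ring
  rw [abs_le] at *
  constructor <;> linarith

theorem abs_mform_self_le_of_mem_ball {K : ℝ} (hK : 1 ≤ K) {x y ξ ξ' ω ω' : E}
    (hx : x ∈ ball 0 2) (hy : y ∈ ball 0 2) (hξ : ξ ∈ ball x K⁻¹) (hξ' : ξ' ∈ ball x K⁻¹)
    (hω : ω ∈ ball y K⁻¹) (hω' : ω' ∈ ball y K⁻¹) :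
    |Mform d m (x - y) (x - y)| ≤ |Mform d m (ξ - ω) (ξ' - ω')| + 20 * K⁻¹ := by
  set u := x - y
  set a := ξ - ω
  set b := ξ' - ω'
  have hK₁ : K⁻¹ ≤ 1 := inv_le_one_of_one_le₀ hK
  have hu : ‖u‖ ≤ 4 := by
    have := norm_sub_le x y
    rw [mem_ball_zero_iff] at hx hy
    linarith
  have hua : ‖u - a‖ ≤ 2 * K⁻¹ := by
    rw [← dist_eq_norm, dist_comm]
    linarith [dist_sub_sub_le ξ ω x y, mem_ball.1 hξ, mem_ball.1 hω]
  have hub : ‖u - b‖ ≤ 2 * K⁻¹ := by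
    rw [← dist_eq_norm, dist_comm]
    linarith [dist_sub_sub_le ξ' ω' x y, mem_ball.1 hξ', mem_ball.1 hω']
  have ha : ‖a‖ ≤ 6 := by
    linarith [norm_le_norm_add_norm_sub' a u, norm_sub_rev u a]
  have hsplit : Mform d m u u = Mform d m (u - a) u + Mform d m a (u - b) + Mform d m a b := by
    simp only [← mBilin_apply, map_sub, LinearMap.sub_apply]
    ring
  rw [hsplit]
  calc _ ≤ |Mform d m (u - a) u| + |Mform d m a (u - b)| + |Mform d m a b| :=
        abs_add_three _ _ _
    _ ≤ 2 * K⁻¹ * 4 + 6 * (2 * K⁻¹) + |Mform d m a b| := by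
        gcongr
        · exact (abs_mform_le _ _).trans (mul_le_mul hua hu (norm_nonneg _) (by positivity))
        · exact (abs_mform_le _ _).trans (mul_le_mul ha hub (norm_nonneg _) (by norm_num))
    _ = _ := by ring

theorem exists_affineSubspace_near_of_abs_mform_self_le {ι : Type*} (hm : m ≤ d - 1)
    (T : Finset ι) (c : ι → E) {δ : ℝ}
    (hc : ∀ i ∈ T, ∀ j ∈ T, |Mform d m (c i - c j) (c i - c j)| ≤ δ) :
    ∃ V : AffineSubspace ℝ E, (V : Set E).Nonempty ∧ finrank ℝ V.direction = m ∧
      ∀ i ∈ T, ∃ p ∈ V, dist (c i) p ≤ (m + 1) * √(2 * δ) := by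
  obtain ⟨p₀, hp₀⟩ : ∃ p₀ : E, ∀ i ∈ T, |Mform d m (c i - p₀) (c i - p₀)| ≤ δ := by
    rcases T.eq_empty_or_nonempty with rfl | ⟨i₀, hi₀⟩
    · exact ⟨0, by simp⟩
    · exact ⟨c i₀, fun i hi => hc i hi i₀ hi₀⟩
  obtain ⟨W, hWdim, hW⟩ := exists_submodule_near_of_abs_bilin_le (mBilin d m) (negCoords d m)
    (fun q hq => by simpa using norm_sq_le_mform_self hq) (fun i : T => c i - p₀) (ε := 2 * δ)
    fun i j => by
      rw [mBilin_apply]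
      refine abs_mform_le_two_mul_of_abs_mform_self_le (hp₀ i i.2) (hp₀ j j.2) ?_
      rw [sub_sub_sub_cancel_right]
      exact hc i i.2 j j.2
  obtain ⟨W', hWW', hW'⟩ := W.exists_le_finrank_eq (hWdim.trans finrank_negCoords_le)
    (by simpa using hm)
  refine ⟨AffineSubspace.mk' p₀ W', ⟨p₀, AffineSubspace.self_mem_mk' _ _⟩,
    by rw [AffineSubspace.direction_mk', hW'], fun i hi => ?_⟩
  obtain ⟨w, hwW, hw⟩ := hW ⟨i, hi⟩
  refine ⟨w + p₀, (AffineSubspace.mem_mk').2 (by simpa using hWW' hwW), ?_⟩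
  rw [dist_eq_norm, show c i - (w + p₀) = c i - p₀ - w by abel]
  exact hw.trans (by gcongr; exact_mod_cast finrank_negCoords_le)

end Mform

theorem caps_dichotomy_general (d m : ℕ) (hm2 : 2 * m ≤ d - 1) (A : ℝ) :
    ∃ α C₀ K₀ : ℝ, 0 < α ∧ 0 < C₀ ∧ 1 ≤ K₀ ∧
      ∀ K : ℝ, K₀ ≤ K →
      ∀ (ι : Type) (T : Finset ι) (ctr : ι → EuclideanSpace ℝ (Fin (d - 1))),
        (∀ i ∈ T, ctr i ∈ ball (0 : EuclideanSpace ℝ (Fin (d - 1))) 2) →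
        ((∃ V : AffineSubspace ℝ (EuclideanSpace ℝ (Fin (d - 1))),
            (V : Set (EuclideanSpace ℝ (Fin (d - 1)))).Nonempty ∧
            Module.finrank ℝ V.direction = m ∧
            ∀ i ∈ T, ball (ctr i) K⁻¹ ⊆
              Metric.thickening (C₀ * K ^ (-α))
                (V : Set (EuclideanSpace ℝ (Fin (d - 1))))) ∨
          (∃ i ∈ T, ∃ j ∈ T,
            ∀ ξ ∈ ball (ctr i) K⁻¹, ∀ ξ' ∈ ball (ctr i) K⁻¹,
            ∀ ω ∈ ball (ctr j) K⁻¹, ∀ ω' ∈ ball (ctr j) K⁻¹,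
              A * K⁻¹ ≤ |Mform d m (ξ - ω) (ξ' - ω')|)) := by
  refine ⟨1 / 2, 1 + (m + 1) * √(2 * (A + 20)), 1, by norm_num, by positivity, le_rfl, ?_⟩
  intro K hK ι T ctr hctr
  refine or_iff_not_imp_right.2 fun hfar => ?_
  push Not at hfar
  have hQ : ∀ i ∈ T, ∀ j ∈ T, |Mform d m (ctr i - ctr j) (ctr i - ctr j)| ≤ (A + 20) * K⁻¹ := by
    intro i hi j hj
    obtain ⟨ξ, hξ, ξ', hξ', ω, hω, ω', hω', hlt⟩ := hfar i hi j hj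
    linarith [abs_mform_self_le_of_mem_ball (m := m) hK (hctr i hi) (hctr j hj) hξ hξ' hω hω']
  obtain ⟨V, hVne, hVdim, hV⟩ := exists_affineSubspace_near_of_abs_mform_self_le (by omega) T ctr hQ
  refine ⟨V, hVne, hVdim, fun i hi z hz => ?_⟩
  obtain ⟨p, hpV, hp⟩ := hV i hi
  have hK₀ : 0 < K := one_pos.trans_le hK
  have hKα : K ^ (-(1 / 2 : ℝ)) = (√K)⁻¹ := by rw [Real.rpow_neg hK₀.le, Real.sqrt_eq_rpow]
  have hKinv : K⁻¹ ≤ (√K)⁻¹ :=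
    inv_anti₀ (Real.sqrt_pos.2 hK₀) ((Real.sqrt_le_left hK₀.le).2 (by nlinarith))
  rw [← mul_assoc, Real.sqrt_mul' _ (inv_nonneg.2 hK₀.le), Real.sqrt_inv] at hp
  refine Metric.mem_thickening_iff.2 ⟨p, hpV, ?_⟩
  calc dist z p ≤ dist z (ctr i) + dist (ctr i) p := dist_triangle _ _ _
    _ < (√K)⁻¹ + (m + 1) * (√(2 * (A + 20)) * (√K)⁻¹) := by
        linarith [mem_ball.1 hz]
    _ = (1 + (m + 1) * √(2 * (A + 20))) * K ^ (-(1 / 2 : ℝ)) := by rw [hKα]; ring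

theorem caps_dichotomy (d m : ℕ) (hm1 : 1 ≤ m) (hm2 : 2 * m ≤ d - 1)
    (A : ℝ) (hA : 0 < A) :
    ∃ α C₀ K₀ : ℝ, 0 < α ∧ 0 < C₀ ∧ 1 ≤ K₀ ∧
      ∀ K : ℝ, K₀ ≤ K →
      ∀ (ι : Type) (T : Finset ι) (ctr : ι → EuclideanSpace ℝ (Fin (d - 1))),
        (∀ i ∈ T, ctr i ∈ ball (0 : EuclideanSpace ℝ (Fin (d - 1))) 2) →
        ((∃ V : AffineSubspace ℝ (EuclideanSpace ℝ (Fin (d - 1))),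
            (V : Set (EuclideanSpace ℝ (Fin (d - 1)))).Nonempty ∧
            Module.finrank ℝ V.direction = m ∧
            ∀ i ∈ T, ball (ctr i) K⁻¹ ⊆
              Metric.thickening (C₀ * K ^ (-α))
                (V : Set (EuclideanSpace ℝ (Fin (d - 1))))) ∨
          (∃ i ∈ T, ∃ j ∈ T,
            ∀ ξ ∈ ball (ctr i) K⁻¹, ∀ ξ' ∈ ball (ctr i) K⁻¹,
            ∀ ω ∈ ball (ctr j) K⁻¹, ∀ ω' ∈ ball (ctr j) K⁻¹,
              A * K⁻¹ ≤ |Mform d m (ξ - ω) (ξ' - ω')|)) :=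
  caps_dichotomy_general d m hm2 A
end

section
/- (Quadratic form bound on a well-spread span.) Let 1 ≤ k ≤ d−1 be an integer and let c > 0 and 0 < σ < 1/2. There is a constant C (depending on d, m, k, c, σ) such that for all K ≥ 1 the following holds: if η¹, …, η^k ∈ ℝ^{d−1} satisfy |ηⁱ| ≤ 2 for all i, |ηⁱ·Mη^j| ≤ c K^{−1} for all i, j (including i = j), and the Gram determinant det( (ηⁱ·η^j)_{1 ≤ i,j ≤ k} ) ≥ K^{−1/2 + σ}, then every ω in the linear span of {η¹, …, η^k} with |ω| ≤ 2 satisfies |ω·Mω| ≤ C K^{−σ}. -/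
/-!
Write `ω = ∑ aᵢ ηᵢ`. The coefficients solve the Gram system `G a = (⟪ηⱼ, ω⟫)ⱼ`, whose entries
are at most `4` by Cauchy–Schwarz, so Cramer's rule bounds `|aᵢ| ≤ k! 4ᵏ / det G ≤ k! 4ᵏ K^(1/2-σ)`.
Expanding `Mω·ω` bilinearly then gives `|Mω·ω| ≤ (k · k! 4ᵏ)² K^(1-2σ) · c K⁻¹`, which is
`O(K^(-2σ)) ⊆ O(K^(-σ))`.
-/

open MeasureTheory Metric

open Finset Matrix Nat

theorem Matrix.cramer_mulVec {n α : Type*} [Fintype n] [DecidableEq n] [CommRing α]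
    (A : Matrix n n α) (a : n → α) : A.cramer (A *ᵥ a) = A.det • a := by
  rw [cramer_eq_adjugate_mulVec, mulVec_mulVec, adjugate_mul, smul_mulVec, one_mulVec]

theorem Matrix.abs_det_mul_le_of_mulVec_eq {n : Type*} [Fintype n] [DecidableEq n]
    {A : Matrix n n ℝ} {a b : n → ℝ} {x : ℝ} (hab : A *ᵥ a = b)
    (hA : ∀ i j, |A i j| ≤ x) (hb : ∀ i, |b i| ≤ x) (i : n) :
    |A.det * a i| ≤ (Fintype.card n)! * x ^ Fintype.card n := by
  have hcramer : A.det * a i = (A.updateCol i b).det := by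
    rw [← cramer_apply, ← hab, cramer_mulVec, Pi.smul_apply, smul_eq_mul]
  have hentries : ∀ p q, |A.updateCol i b p q| ≤ x := by
    intro p q
    rw [updateCol_apply]
    split_ifs
    exacts [hb p, hA p q]
  rw [hcramer, ← nsmul_eq_mul]
  exact det_le (abv := AbsoluteValue.abs) hentries

theorem abs_det_gram_mul_le {E ι : Type*} [NormedAddCommGroup E] [InnerProductSpace ℝ E]
    [Fintype ι] [DecidableEq ι] {η : ι → E} {a : ι → ℝ} {R : ℝ}
    (hη : ∀ i, ‖η i‖ ≤ R) (hω : ‖∑ i, a i • η i‖ ≤ R) (i : ι) :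
    |(gram ℝ η).det * a i| ≤ (Fintype.card ι)! * (R ^ 2) ^ Fintype.card ι := by
  have hR : 0 ≤ R := (norm_nonneg _).trans hω
  have cauchySchwarz : ∀ {u v : E}, ‖u‖ ≤ R → ‖v‖ ≤ R → |inner ℝ u v| ≤ R ^ 2 := fun hu hv =>
    (abs_real_inner_le_norm _ _).trans (by rw [sq]; gcongr)
  refine abs_det_mul_le_of_mulVec_eq (b := fun j => inner ℝ (η j) (∑ i, a i • η i)) ?_
    (fun i j => cauchySchwarz (hη i) (hη j)) (fun j => cauchySchwarz (hη j) hω) i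
  ext j
  simp [mulVec, dotProduct, inner_sum, real_inner_smul_right, mul_comm]

theorem LinearMap.abs_apply_sum_smul_le {E ι : Type*} [AddCommGroup E] [Module ℝ E] [Fintype ι]
    (β : E →ₗ[ℝ] E →ₗ[ℝ] ℝ) {η : ι → E} {a : ι → ℝ} {A ε : ℝ}
    (ha : ∀ i, |a i| ≤ A) (hβ : ∀ i j, |β (η i) (η j)| ≤ ε) :
    |β (∑ i, a i • η i) (∑ j, a j • η j)| ≤ (Fintype.card ι * A) ^ 2 * ε := by
  have hA : ∀ i, 0 ≤ A := fun i => (abs_nonneg _).trans (ha i)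
  simp only [map_sum, map_smul, LinearMap.sum_apply, LinearMap.smul_apply, smul_eq_mul]
  calc |∑ j, a j * ∑ i, a i * β (η i) (η j)|
      ≤ ∑ j, |a j| * ∑ i, |a i| * |β (η i) (η j)| := by
        refine (abs_sum_le_sum_abs _ _).trans (sum_le_sum fun j _ => ?_)
        rw [abs_mul]
        gcongr
        refine (abs_sum_le_sum_abs _ _).trans_eq (sum_congr rfl fun i _ => abs_mul _ _)
    _ ≤ ∑ _i : ι, A * ∑ _j : ι, A * ε := by
        gcongr with j _ i _
        exacts [hA j, ha j, hA i, ha i, hβ i j]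
    _ = (Fintype.card ι * A) ^ 2 * ε := by simp [sum_const]; ring

noncomputable def Mform.bilin (d m : ℕ) :
    EuclideanSpace ℝ (Fin (d - 1)) →ₗ[ℝ] EuclideanSpace ℝ (Fin (d - 1)) →ₗ[ℝ] ℝ := by
  refine LinearMap.mk₂ ℝ (Mform d m) ?_ ?_ ?_ ?_ <;>
  · intros
    simp only [Mform, PiLp.add_apply, PiLp.smul_apply, smul_eq_mul, mul_sum, ← sum_add_distrib]
    exact sum_congr rfl fun _ _ => by ring

@[simp]
theorem Mform.bilin_apply (d m : ℕ) (ξ η : EuclideanSpace ℝ (Fin (d - 1))) :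
    Mform.bilin d m ξ η = Mform d m ξ η :=
  rfl

theorem Real.inv_rpow_sq_mul_inv {K σ : ℝ} (hK : 0 < K) :
    (K ^ (-(1 / 2) + σ))⁻¹ ^ 2 * K⁻¹ = K ^ (-(2 * σ)) := by
  rw [inv_pow, ← rpow_natCast, ← rpow_mul hK.le, ← rpow_neg hK.le, ← rpow_neg_one,
    ← rpow_add hK]
  ring_nf

theorem span_quadratic_bound_general (d m k : ℕ) (hk1 : 1 ≤ k) (c σ : ℝ) (hc : 0 < c)
    (hσ1 : 0 < σ) :
    ∃ C : ℝ, 0 < C ∧ ∀ K : ℝ, 1 ≤ K →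
      ∀ η : Fin k → EuclideanSpace ℝ (Fin (d - 1)),
        (∀ i, ‖η i‖ ≤ 2) →
        (∀ i j, |Mform d m (η i) (η j)| ≤ c * K⁻¹) →
        K ^ (-(1 / 2 : ℝ) + σ) ≤
          (Matrix.of fun i j : Fin k => (inner ℝ (η i) (η j) : ℝ)).det →
        ∀ ω ∈ Submodule.span ℝ (Set.range η), ‖ω‖ ≤ 2 →
          |Mform d m ω ω| ≤ C * K ^ (-σ) := by
  set A : ℝ := k ! * (2 ^ 2) ^ k
  have hk : (0 : ℝ) < k := by exact_mod_cast hk1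
  refine ⟨(k * A) ^ 2 * c, by positivity, fun K hK η hη hM hdet ω hω hω₂ => ?_⟩
  change _ ≤ (gram ℝ η).det at hdet
  obtain ⟨a, rfl⟩ := (Submodule.mem_span_range_iff_exists_fun ℝ).mp hω
  have hK₀ : 0 < K := one_pos.trans_le hK
  have hdet₀ : 0 < (gram ℝ η).det := (Real.rpow_pos_of_pos hK₀ _).trans_le hdet
  have ha : ∀ i, |a i| ≤ A * (K ^ (-(1 / 2) + σ))⁻¹ := fun i => by
    have hcramer := abs_det_gram_mul_le hη hω₂ i
    rw [abs_mul, abs_of_pos hdet₀, Fintype.card_fin] at hcramer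
    calc |a i| ≤ A / (gram ℝ η).det := (le_div_iff₀' hdet₀).mpr hcramer
      _ ≤ A * (K ^ (-(1 / 2) + σ))⁻¹ := by rw [div_eq_mul_inv]; gcongr
  calc |Mform d m (∑ i, a i • η i) (∑ i, a i • η i)|
      ≤ (k * (A * (K ^ (-(1 / 2) + σ))⁻¹)) ^ 2 * (c * K⁻¹) := by
        simpa only [Fintype.card_fin, Mform.bilin_apply] using
          (Mform.bilin d m).abs_apply_sum_smul_le ha hM
    _ = (k * A) ^ 2 * c * K ^ (-(2 * σ)) := by
        rw [← Real.inv_rpow_sq_mul_inv hK₀]; ring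
    _ ≤ (k * A) ^ 2 * c * K ^ (-σ) := by
        gcongr
        linarith

theorem span_quadratic_bound (d m k : ℕ) (hm1 : 1 ≤ m) (hm2 : 2 * m ≤ d - 1)
    (hk1 : 1 ≤ k) (hk2 : k ≤ d - 1) (c σ : ℝ) (hc : 0 < c)
    (hσ1 : 0 < σ) (hσ2 : σ < 1 / 2) :
    ∃ C : ℝ, 0 < C ∧ ∀ K : ℝ, 1 ≤ K →
      ∀ η : Fin k → EuclideanSpace ℝ (Fin (d - 1)),
        (∀ i, ‖η i‖ ≤ 2) →
        (∀ i j, |Mform d m (η i) (η j)| ≤ c * K⁻¹) →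
        K ^ (-(1 / 2 : ℝ) + σ) ≤
          (Matrix.of fun i j : Fin k => (inner ℝ (η i) (η j) : ℝ)).det →
        ∀ ω ∈ Submodule.span ℝ (Set.range η), ‖ω‖ ≤ 2 →
          |Mform d m ω ω| ≤ C * K ^ (-σ) :=
  span_quadratic_bound_general d m k hk1 c σ hc hσ1
end

section
/- (Normalizing map for strongly separated caps.) Let c > 0. There exist a constant C_d > 0 depending only on d and K₀ ≥ 1 depending on d and c such that for all K ≥ K₀ the following holds. Suppose ξ* ∈ ℝ^{d−1} has the form ξ* = (ξ₁, 0, …, 0, ξ_{d−m}, …, ξ_{d−1}), with |ξ*| ≤ 2, |ξ*|² ≥ c K^{−1}, and ξ*·Mξ* ≥ c K^{−1}. Then: (a) ξ₁² ≥ c K^{−1}; (b) the unique linear map S : ℝ^{d−1} → ℝ^{d−1} with S ξ* = e₁ and S e_j = e_j for j = 2, …, d−1 (where e₁, …, e_{d−1} is the standard basis) has operator norm ‖S‖ ≤ C_d c^{−1/2} K^{1/2}; and (c) for all ξ, ξ̄ in the ball of radius K^{−1} centered at ξ* and all η, η̄ in the ball of radius K^{−1} centered at the origin, |M(Sξ −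 Sη)·(Sξ̄ − Sη̄)| ≥ 1/2. -/
/-!
The support condition on `ξ*` kills every positive direction of `M` except `e₁`, so
`Mξ*·ξ* ≤ ξ₁²`, which is (a). The map `S` is the rank-one perturbation
`x ↦ x + x₁ ξ₁⁻¹ (e₁ - ξ*)` of the identity; since `ξ₁ ≠ 0`, the vectors `ξ*, e₂, …, e_{d-1}`
form a basis, which gives uniqueness, and `‖S‖ ≤ 5 / |ξ₁| ≤ 5 √(K / c)`. For `ξ` near `ξ*` and
`η` near `0`, `Sξ - Sη` is within `2‖S‖ / K ≤ 10 / √(cK)` of `e₁`, where the form equals `1`;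
taking `cK ≥ 10⁴` keeps the form above `1/2`.
-/

open MeasureTheory Metric

open scoped InnerProductSpace

theorem Module.Basis.ext_of_apply_eq_of_repr_ne_zero {ι K V W : Type*} [Fintype ι] [Field K]
    [AddCommGroup V] [Module K V] [AddCommGroup W] [Module K W] (b : Basis ι K V) {i : ι}
    {v : V} (hv : b.repr v i ≠ 0) {f g : V →ₗ[K] W} (hfg : f v = g v)
    (hb : ∀ j, j ≠ i → f (b j) = g (b j)) : f = g := by
  have hvanish : ∀ j, j ≠ i → (f - g) (b j) = 0 := fun j hj => sub_eq_zero.2 (hb j hj)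
  have hi : (f - g) (b i) = 0 := by
    have hv' : (f - g) v = b.repr v i • (f - g) (b i) := by
      conv_lhs => rw [← b.sum_repr v]
      rw [map_sum, Finset.sum_eq_single i (fun j _ hj => by rw [map_smul, hvanish j hj, smul_zero])
        (by simp)]
      exact map_smul _ _ _
    rwa [LinearMap.sub_apply, hfg, sub_self, eq_comm, smul_eq_zero, or_iff_right hv] at hv'
  refine b.ext fun j => sub_eq_zero.1 ?_
  by_cases hj : j = i
  · exact hj ▸ hi
  · exact hvanish j hj

section NormalizingMap

variable {𝕜 E : Type*} [RCLike 𝕜] [NormedAddCommGroup E] [InnerProductSpace 𝕜 E]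

variable (𝕜) in
noncomputable def normalizingMap (e ξ : E) : E →L[𝕜] E :=
  ContinuousLinearMap.id 𝕜 E + (innerSL 𝕜 e).smulRight ((⟪e, ξ⟫_𝕜)⁻¹ • (e - ξ))

theorem normalizingMap_apply (e ξ x : E) :
    normalizingMap 𝕜 e ξ x = x + ⟪e, x⟫_𝕜 • (⟪e, ξ⟫_𝕜)⁻¹ • (e - ξ) := rfl

theorem normalizingMap_apply_self {e ξ : E} (h : ⟪e, ξ⟫_𝕜 ≠ 0) : normalizingMap 𝕜 e ξ ξ = e := by
  rw [normalizingMap_apply, smul_inv_smul₀ h, add_sub_cancel]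

theorem normalizingMap_apply_of_inner_eq_zero (e ξ : E) {x : E} (hx : ⟪e, x⟫_𝕜 = 0) :
    normalizingMap 𝕜 e ξ x = x := by
  rw [normalizingMap_apply, hx, zero_smul, add_zero]

theorem norm_normalizingMap_le (e ξ : E) :
    ‖normalizingMap 𝕜 e ξ‖ ≤ 1 + ‖e‖ * ‖e - ξ‖ / ‖⟪e, ξ⟫_𝕜‖ := by
  refine (norm_add_le _ _).trans (add_le_add ContinuousLinearMap.norm_id_le (le_of_eq ?_))
  rw [ContinuousLinearMap.norm_smulRight_apply, innerSL_apply_norm, norm_smul, norm_inv]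
  ring

theorem norm_normalizingMap_le_of_norm_le {e ξ : E} {R : ℝ} (he : ‖e‖ = 1) (hξ : ‖ξ‖ ≤ R)
    (h : ⟪e, ξ⟫_𝕜 ≠ 0) : ‖normalizingMap 𝕜 e ξ‖ ≤ (1 + 2 * R) / ‖⟪e, ξ⟫_𝕜‖ := by
  have hpos : 0 < ‖⟪e, ξ⟫_𝕜‖ := norm_pos_iff.2 h
  have hinner : ‖⟪e, ξ⟫_𝕜‖ ≤ R := (norm_inner_le_norm e ξ).trans (by rwa [he, one_mul])
  have hsub : ‖e - ξ‖ ≤ 1 + R := by linarith [norm_sub_le e ξ]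
  calc ‖normalizingMap 𝕜 e ξ‖ ≤ 1 + ‖e‖ * ‖e - ξ‖ / ‖⟪e, ξ⟫_𝕜‖ := norm_normalizingMap_le e ξ
    _ ≤ R / ‖⟪e, ξ⟫_𝕜‖ + (1 + R) / ‖⟪e, ξ⟫_𝕜‖ := by
        rw [he, one_mul]
        gcongr
        rwa [one_le_div hpos]
    _ = (1 + 2 * R) / ‖⟪e, ξ⟫_𝕜‖ := by ring

end NormalizingMap

section EuclideanSpace

variable {𝕜 ι : Type*} [RCLike 𝕜] [Fintype ι] [DecidableEq ι] {i : ι} {ξ : EuclideanSpace 𝕜 ι}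

theorem EuclideanSpace.inner_single_one_left (i : ι) (x : EuclideanSpace 𝕜 ι) :
    ⟪EuclideanSpace.single i (1 : 𝕜), x⟫_𝕜 = x i := by
  simp [EuclideanSpace.inner_single_left]

theorem normalizingMap_single_apply_self (hξ : ξ i ≠ 0) :
    normalizingMap 𝕜 (EuclideanSpace.single i 1) ξ ξ = EuclideanSpace.single i 1 :=
  normalizingMap_apply_self (by rwa [EuclideanSpace.inner_single_one_left])

theorem normalizingMap_single_apply_single {j : ι} (hj : j ≠ i) :
    normalizingMap 𝕜 (EuclideanSpace.single i 1) ξ (EuclideanSpace.single j 1) =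
      EuclideanSpace.single j 1 :=
  normalizingMap_apply_of_inner_eq_zero _ _ <| by
    simp [EuclideanSpace.inner_single_one_left, hj.symm]

theorem eq_normalizingMap_single {T : EuclideanSpace 𝕜 ι →L[𝕜] EuclideanSpace 𝕜 ι}
    (hξ : ξ i ≠ 0) (hTξ : T ξ = EuclideanSpace.single i 1)
    (hT : ∀ j, j ≠ i → T (EuclideanSpace.single j 1) = EuclideanSpace.single j 1) :
    T = normalizingMap 𝕜 (EuclideanSpace.single i 1) ξ := by
  refine ContinuousLinearMap.coe_injective <|
    (PiLp.basisFun 2 𝕜 ι).ext_of_apply_eq_of_repr_ne_zero hξ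
      (hTξ.trans (normalizingMap_single_apply_self hξ).symm) fun j hj => ?_
  simp only [PiLp.basisFun_apply, ContinuousLinearMap.coe_coe]
  rw [hT j hj, normalizingMap_single_apply_single hj]

theorem norm_normalizingMap_single_le {R : ℝ} (hξR : ‖ξ‖ ≤ R) (hξ : ξ i ≠ 0) :
    ‖normalizingMap 𝕜 (EuclideanSpace.single i 1) ξ‖ ≤ (1 + 2 * R) / ‖ξ i‖ := by
  have hinner := EuclideanSpace.inner_single_one_left i ξ
  have h := norm_normalizingMap_le_of_norm_le (e := EuclideanSpace.single i 1) (by simp) hξR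
    (hinner ▸ hξ)
  rwa [hinner] at h

end EuclideanSpace

section Mform

variable {d m : ℕ}

theorem Mform_sub_left (a b c : EuclideanSpace ℝ (Fin (d - 1))) :
    Mform d m (a - b) c = Mform d m a c - Mform d m b c := by
  simp only [Mform, PiLp.sub_apply, mul_sub, sub_mul, Finset.sum_sub_distrib]

theorem Mform_sub_right (a b c : EuclideanSpace ℝ (Fin (d - 1))) :
    Mform d m a (b - c) = Mform d m a b - Mform d m a c := by
  simp only [Mform, PiLp.sub_apply, mul_sub, Finset.sum_sub_distrib]

theorem abs_Mform_le (ξ η : EuclideanSpace ℝ (Fin (d - 1))) : |Mform d m ξ η| ≤ ‖ξ‖ * ‖η‖ := by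
  have hsign : ∀ i : Fin (d - 1), |(if (i : ℕ) < d - 1 - m then (1 : ℝ) else -1)| = 1 := by
    intro i; split_ifs <;> simp
  calc |Mform d m ξ η| ≤ ∑ i, |ξ i| * |η i| := by
        refine (Finset.abs_sum_le_sum_abs _ _).trans (le_of_eq ?_)
        simp only [abs_mul, hsign, one_mul]
    _ ≤ √(∑ i, |ξ i| ^ 2) * √(∑ i, |η i| ^ 2) := Real.sum_mul_le_sqrt_mul_sqrt _ _ _
    _ = ‖ξ‖ * ‖η‖ := by simp only [EuclideanSpace.norm_eq, Real.norm_eq_abs]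

theorem abs_Mform_sub_Mform_le (a b e : EuclideanSpace ℝ (Fin (d - 1))) :
    |Mform d m a b - Mform d m e e| ≤ ‖a - e‖ * ‖b‖ + ‖e‖ * ‖b - e‖ := by
  have hsplit : Mform d m a b - Mform d m e e = Mform d m (a - e) b + Mform d m e (b - e) := by
    rw [Mform_sub_left, Mform_sub_right]; ring
  rw [hsplit]
  exact (abs_add_le _ _).trans (add_le_add (abs_Mform_le _ _) (abs_Mform_le _ _))

theorem half_le_abs_Mform {a b e : EuclideanSpace ℝ (Fin (d - 1))} (he : ‖e‖ = 1)
    (hee : Mform d m e e = 1) (ha : ‖a - e‖ ≤ 1 / 10) (hb : ‖b - e‖ ≤ 1 / 10) :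
    1 / 2 ≤ |Mform d m a b| := by
  have hbn : ‖b‖ ≤ 11 / 10 := by linarith [norm_le_norm_sub_add b e]
  have hclose := abs_Mform_sub_Mform_le (m := m) a b e
  rw [hee, he] at hclose
  have hprod : ‖a - e‖ * ‖b‖ ≤ 1 / 10 * (11 / 10) := by gcongr
  exact le_abs.2 (Or.inl (by linarith [(abs_le.1 hclose).1]))

theorem Mform_single_self {i : Fin (d - 1)} (hi : (i : ℕ) < d - 1 - m) :
    Mform d m (EuclideanSpace.single i 1) (EuclideanSpace.single i 1) = 1 := by
  rw [Mform, Finset.sum_eq_single i (fun j _ hj => by simp [hj]) (by simp)]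
  simp [hi]

theorem Mform_self_le_sq {ξ : EuclideanSpace ℝ (Fin (d - 1))} {k : Fin (d - 1)}
    (hξ : ∀ i : Fin (d - 1), i ≠ k → (i : ℕ) < d - 1 - m → ξ i = 0) :
    Mform d m ξ ξ ≤ ξ k ^ 2 := by
  calc Mform d m ξ ξ ≤ ∑ i, if i = k then ξ k ^ 2 else 0 := by
        refine Finset.sum_le_sum fun i _ => ?_
        by_cases hik : i = k
        · subst hik
          rw [if_pos rfl]
          split_ifs <;> nlinarith [sq_nonneg (ξ i)]
        · by_cases hi : (i : ℕ) < d - 1 - m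
          · simp [hik, hi, hξ i hik hi]
          · simp only [hi, hik, if_false]; nlinarith [sq_nonneg (ξ i)]
    _ = ξ k ^ 2 := by simp

end Mform

theorem ContinuousLinearMap.norm_sub_sub_le_of_mem_ball {E F : Type*} [SeminormedAddCommGroup E]
    [SeminormedAddCommGroup F] [NormedSpace ℝ E] [NormedSpace ℝ F] (S : E →L[ℝ] F) {ξ₀ ξ η : E}
    {r : ℝ} (hξ : ξ ∈ ball ξ₀ r) (hη : η ∈ ball 0 r) : ‖S ξ - S η - S ξ₀‖ ≤ ‖S‖ * (2 * r) := by
  rw [mem_ball, dist_eq_norm] at hξ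
  rw [mem_ball_zero_iff] at hη
  calc ‖S ξ - S η - S ξ₀‖ = ‖S (ξ - ξ₀ - η)‖ := by rw [map_sub, map_sub]; abel_nf
    _ ≤ ‖S‖ * ‖ξ - ξ₀ - η‖ := S.le_opNorm _
    _ ≤ ‖S‖ * (2 * r) := by gcongr; linarith [norm_sub_le (ξ - ξ₀) η]

theorem inv_abs_le_sqrt_div_sqrt {c K x : ℝ} (hc : 0 < c) (hK : 0 < K) (h : c * K⁻¹ ≤ x ^ 2) :
    |x|⁻¹ ≤ √K / √c := by
  rw [← inv_div]
  refine inv_anti₀ (by positivity) ?_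
  rw [← Real.sqrt_div' _ hK.le, ← Real.sqrt_sq_eq_abs]
  exact Real.sqrt_le_sqrt h

theorem sqrt_div_sqrt_mul_inv_le {c K : ℝ} (hc : 0 < c) (hK : 0 < K) (h : 10000 ≤ c * K) :
    √K / √c * K⁻¹ ≤ 1 / 100 := by
  have hsq : 100 ≤ √c * √K := by
    rw [← Real.sqrt_mul hc.le, show (100 : ℝ) = √(100 ^ 2) by simp]
    exact Real.sqrt_le_sqrt (by linarith)
  have hK' : √K * √K = K := Real.mul_self_sqrt hK.le
  have hcs : 0 < √c := Real.sqrt_pos.2 hc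
  have hKs : 0 < √K := Real.sqrt_pos.2 hK
  calc √K / √c * K⁻¹ = 1 / (√c * √K) := by
        nth_rw 2 [← hK']; field_simp
    _ ≤ 1 / 100 := by gcongr

theorem rpow_neg_half_mul_rpow_half {c K : ℝ} (hc : 0 ≤ c) :
    c ^ (-(1 / 2 : ℝ)) * K ^ ((1 : ℝ) / 2) = √K / √c := by
  rw [Real.rpow_neg hc, Real.sqrt_eq_rpow, Real.sqrt_eq_rpow, inv_mul_eq_div]

theorem half_le_abs_Mform_of_mem_ball {d m : ℕ} {i : Fin (d - 1)} (hi : (i : ℕ) < d - 1 - m)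
    {S : EuclideanSpace ℝ (Fin (d - 1)) →L[ℝ] EuclideanSpace ℝ (Fin (d - 1))}
    {ξs : EuclideanSpace ℝ (Fin (d - 1))} (hS : S ξs = EuclideanSpace.single i 1) {r : ℝ}
    (hr : ‖S‖ * (2 * r) ≤ 1 / 10) {ξ ξ' η η' : EuclideanSpace ℝ (Fin (d - 1))}
    (hξ : ξ ∈ ball ξs r) (hξ' : ξ' ∈ ball ξs r) (hη : η ∈ ball 0 r) (hη' : η' ∈ ball 0 r) :
    1 / 2 ≤ |Mform d m (S ξ - S η) (S ξ' - S η')| :=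
  half_le_abs_Mform (by simp) (Mform_single_self hi)
    (hS ▸ (S.norm_sub_sub_le_of_mem_ball hξ hη).trans hr)
    (hS ▸ (S.norm_sub_sub_le_of_mem_ball hξ' hη').trans hr)

theorem normalizing_map (d m : ℕ) (hd : 3 ≤ d) (hm2 : 2 * m ≤ d - 1) :
    ∃ Cd : ℝ, 0 < Cd ∧ ∀ c : ℝ, 0 < c →
      ∃ K₀ : ℝ, 1 ≤ K₀ ∧ ∀ K : ℝ, K₀ ≤ K →
      ∀ ξs : EuclideanSpace ℝ (Fin (d - 1)),
        (∀ i : Fin (d - 1), (i : ℕ) ≠ 0 → (i : ℕ) < d - 1 - m → ξs i = 0) →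
        ‖ξs‖ ≤ 2 → c * K⁻¹ ≤ ‖ξs‖ ^ 2 → c * K⁻¹ ≤ Mform d m ξs ξs →
        (c * K⁻¹ ≤ (ξs ⟨0, by omega⟩) ^ 2) ∧
        ∃ S : EuclideanSpace ℝ (Fin (d - 1)) →L[ℝ] EuclideanSpace ℝ (Fin (d - 1)),
          (S ξs = EuclideanSpace.single ⟨0, by omega⟩ 1 ∧
            ∀ j : Fin (d - 1), (j : ℕ) ≠ 0 →
              S (EuclideanSpace.single j 1) = EuclideanSpace.single j 1) ∧
          (∀ S' : EuclideanSpace ℝ (Fin (d - 1)) →L[ℝ] EuclideanSpace ℝ (Fin (d - 1)),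
            (S' ξs = EuclideanSpace.single ⟨0, by omega⟩ 1 ∧
              ∀ j : Fin (d - 1), (j : ℕ) ≠ 0 →
                S' (EuclideanSpace.single j 1) = EuclideanSpace.single j 1) →
            S' = S) ∧
          ‖S‖ ≤ Cd * c ^ (-(1 / 2 : ℝ)) * K ^ ((1 : ℝ) / 2) ∧
          (∀ ξ ∈ ball ξs K⁻¹, ∀ ξ' ∈ ball ξs K⁻¹,
           ∀ η ∈ ball (0 : EuclideanSpace ℝ (Fin (d - 1))) K⁻¹,
           ∀ η' ∈ ball (0 : EuclideanSpace ℝ (Fin (d - 1))) K⁻¹,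
            1 / 2 ≤ |Mform d m (S ξ - S η) (S ξ' - S η')|) := by
  refine ⟨5, by norm_num, fun c hc => ⟨max 1 (10000 / c), le_max_left _ _,
    fun K hK ξs hsupp hnorm _ hM => ?_⟩⟩
  have hKpos : 0 < K := one_pos.trans_le ((le_max_left _ _).trans hK)
  have hcK : 10000 ≤ c * K := by
    rw [mul_comm, ← div_le_iff₀ hc]; exact (le_max_right _ _).trans hK
  set i₀ : Fin (d - 1) := ⟨0, by omega⟩
  have hi₀ : (i₀ : ℕ) < d - 1 - m := by simp only [i₀]; omega
  have hsq : c * K⁻¹ ≤ ξs i₀ ^ 2 :=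
    hM.trans (Mform_self_le_sq fun i hi => hsupp i ((Fin.ne_iff_vne i i₀).1 hi))
  have hx : ξs i₀ ≠ 0 := fun h => (mul_pos hc (inv_pos.2 hKpos)).not_ge (by simpa [h] using hsq)
  set S := normalizingMap ℝ (EuclideanSpace.single i₀ 1) ξs
  have hSnorm : ‖S‖ ≤ 5 * (√K / √c) := by
    calc ‖S‖ ≤ 5 * |ξs i₀|⁻¹ :=
          (norm_normalizingMap_single_le hnorm hx).trans_eq (by rw [Real.norm_eq_abs]; ring)
      _ ≤ 5 * (√K / √c) := by gcongr; exact inv_abs_le_sqrt_div_sqrt hc hKpos hsq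
  refine ⟨hsq, S, ⟨normalizingMap_single_apply_self hx, fun j hj =>
      normalizingMap_single_apply_single ((Fin.ne_iff_vne j i₀).2 hj)⟩,
    fun S' ⟨hS'ξs, hS'⟩ =>
      eq_normalizingMap_single hx hS'ξs fun j hj => hS' j ((Fin.ne_iff_vne j i₀).1 hj),
    by rwa [mul_assoc, rpow_neg_half_mul_rpow_half hc.le],
    fun ξ hξ ξ' hξ' η hη η' hη' =>
      half_le_abs_Mform_of_mem_ball hi₀ (normalizingMap_single_apply_self hx) ?_ hξ hξ' hη hη'⟩
  calc ‖S‖ * (2 * K⁻¹) ≤ 5 * (√K / √c) * (2 * K⁻¹) := by gcongr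
    _ = 10 * (√K / √c * K⁻¹) := by ring
    _ ≤ 1 / 10 := by linarith [sqrt_div_sqrt_mul_inv_le hc hKpos hcK]
end
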